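/- arXiv:2208.12998 — 9 statements merged into one kernel-verified Lean document; each statement's English description precedes it below -/
import Mathlib

section
/- Fix a nonzero real number λ and integers m ≥ 0, r ≥ 0. Let θ be the operator on the formal power series ring ℝ[[x]] given by (θ f)(x) = x·f'(x) (formal derivative), and let (θ)_{m,λ} denote the composite operator θ∘(θ − λ·id)∘···∘(θ − (m−1)λ·id) (the identity operator when m = 0). Then for every f ∈ ℝ[[x]]: (θ)_{m,λ}(x^r · f(x)) = Σ_{l=0}^{m} {m+r brace l+r}_{r,λ} · x^{l+r} · f^{(l)}(x), where f^{(l)} denotes the l-th formal derivative of f. -/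
open Finset PowerSeries

noncomputable section

/-- The degenerate falling factorial `(x)_{n,λ} = x(x-λ)⋯(x-(n-1)λ)`. -/
def dff (lam x : ℝ) (n : ℕ) : ℝ := ∏ i ∈ Finset.range n, (x - i * lam)

/-- The ordinary falling factorial `(x)_n = x(x-1)⋯(x-n+1)`. -/
def ff (x : ℝ) (n : ℕ) : ℝ := ∏ i ∈ Finset.range n, (x - i)

/-- The operator `θ` on `ℝ[[x]]` given by `(θ f)(x) = x·f'(x)`. -/
def theta (f : PowerSeries ℝ) : PowerSeries ℝ := PowerSeries.X * f.derivativeFun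

/-- The composite operator `(θ)_{m,λ} = θ∘(θ-λ)∘⋯∘(θ-(m-1)λ)`, the identity when `m = 0`. -/
def thetaFall (lam : ℝ) : ℕ → PowerSeries ℝ → PowerSeries ℝ
  | 0 => fun f => f
  | n + 1 => fun f => thetaFall lam n (theta f - ((n : ℝ) * lam) • f)

/-! Both sides act diagonally on monomials: `(θ)_{m,λ} x^n = (n)_{m,λ} x^n` and
`x^l D^l x^d = (d)_l x^d`. Comparing the coefficients of `x^(d+r)` therefore reduces the
theorem to the defining identity `(d+r)_{m,λ} = ∑_l S m l (d)_l` of the Stirling numbers,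
evaluated at the integer `x = d`. -/

set_option linter.deprecated false in
theorem derivativeFun_eq_derivative {R : Type*} [CommSemiring R] :
    derivativeFun (R := R) = d⁄dX R :=
  rfl

theorem ff_natCast (d l : ℕ) : ff d l = d.descFactorial l := by
  rw [ff, ← descPochhammer_eval_eq_prod_range, descPochhammer_eval_eq_descFactorial]

theorem coeff_theta (f : PowerSeries ℝ) (n : ℕ) : coeff n (theta f) = n * coeff n f := by
  cases n with
  | zero => simp [theta]
  | succ n =>
    rw [theta, coeff_succ_X_mul, derivativeFun_eq_derivative, coeff_derivative]
    push_cast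
    ring

theorem coeff_thetaFall (lam : ℝ) (m : ℕ) (f : PowerSeries ℝ) (n : ℕ) :
    coeff n (thetaFall lam m f) = dff lam n m * coeff n f := by
  induction m generalizing f with
  | zero => simp [thetaFall, dff]
  | succ m ih =>
    rw [thetaFall, ih, map_sub, map_smul, coeff_theta, smul_eq_mul, dff, dff, prod_range_succ]
    ring

theorem coeff_X_pow_mul_iterate_derivative {R : Type*} [CommSemiring R] (f : R⟦X⟧) (d l : ℕ) :
    coeff d (X ^ l * (d⁄dX R)^[l] f) = d.descFactorial l * coeff d f := by
  rcases le_or_gt l d with hld | hdl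
  · obtain ⟨e, rfl⟩ := Nat.exists_eq_add_of_le' hld
    rw [coeff_X_pow_mul, coeff_iterate_derivative, Nat.add_descFactorial_eq_ascFactorial]
  · rw [coeff_X_pow_mul', if_neg (by omega), Nat.descFactorial_of_lt hdl, Nat.cast_zero, zero_mul]

theorem statement_0_general (lam : ℝ) (m r : ℕ)
    (S : ℕ → ℕ → ℝ)
    (hS : ∀ (n : ℕ) (x : ℝ), dff lam (x + r) n = ∑ k ∈ Finset.range (n + 1), S n k * ff x k)
    (f : PowerSeries ℝ) :
    thetaFall lam m (PowerSeries.X ^ r * f) =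
      ∑ l ∈ Finset.range (m + 1),
        S m l • (PowerSeries.X ^ (l + r) * (derivativeFun (R := ℝ))^[l] f) := by
  ext n
  simp only [coeff_thetaFall, map_sum, map_smul, smul_eq_mul, derivativeFun_eq_derivative]
  rcases lt_or_ge n r with hnr | hrn
  · rw [coeff_X_pow_mul', if_neg (by omega), mul_zero]
    refine (sum_eq_zero fun l _ => ?_).symm
    rw [coeff_X_pow_mul', if_neg (by omega), mul_zero]
  · obtain ⟨d, rfl⟩ := Nat.exists_eq_add_of_le' hrn
    have hterm (l : ℕ) : coeff (d + r) (X ^ (l + r) * (d⁄dX ℝ)^[l] f)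
        = d.descFactorial l * coeff d f := by
      rw [pow_add, mul_right_comm, coeff_mul_X_pow, coeff_X_pow_mul_iterate_derivative]
    calc dff lam ↑(d + r) m * coeff (d + r) (X ^ r * f)
        = (∑ l ∈ range (m + 1), S m l * ff d l) * coeff d f := by
          rw [coeff_X_pow_mul, ← hS, Nat.cast_add]
      _ = ∑ l ∈ range (m + 1), S m l * coeff (d + r) (X ^ (l + r) * (d⁄dX ℝ)^[l] f) := by
          simp only [sum_mul, hterm, ff_natCast, mul_assoc]

/-- `(θ)_{m,λ}(x^r·f) = ∑_{l=0}^{m} {m+r brace l+r}_{r,λ} x^{l+r} f^{(l)}(x)`,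
where `S n k` denotes the degenerate `r`-Stirling number of the second kind
`{n+r brace k+r}_{r,λ}`, characterized by `(x+r)_{n,λ} = ∑_{k=0}^n S n k (x)_k`. -/
theorem statement_0 (lam : ℝ) (hlam : lam ≠ 0) (m r : ℕ)
    (S : ℕ → ℕ → ℝ)
    (hS : ∀ (n : ℕ) (x : ℝ), dff lam (x + r) n = ∑ k ∈ Finset.range (n + 1), S n k * ff x k)
    (f : PowerSeries ℝ) :
    thetaFall lam m (PowerSeries.X ^ r * f) =
      ∑ l ∈ Finset.range (m + 1),
        S m l • (PowerSeries.X ^ (l + r) * (derivativeFun (R := ℝ))^[l] f) :=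
  statement_0_general lam m r S hS f
end
end

section
/- Fix a nonzero real number λ and integers m ≥ 0, r ≥ 0. For every real number x, the series Σ_{n=0}^{∞} (n+r)_{m,λ} x^n / n! converges absolutely, and Σ_{k=0}^{m} {m+r brace k+r}_{r,λ} x^k = e^{−x} · Σ_{n=0}^{∞} (n+r)_{m,λ} x^n / n! (the left-hand side is the degenerate r-Bell polynomial φ^{(r)}_{m,λ}(x)). -/
open Finset

noncomputable section

/-! Since `(n)_k xⁿ / n! = x^k · x^(n-k) / (n-k)!` for `n ≥ k` and vanishes for `n < k`, the
series `∑ₙ (n)_k xⁿ / n!` sums to `x^k eˣ`. Expanding `(n+r)_{m,λ}` in falling factorials of `n`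
and summing termwise gives `∑ₙ (n+r)_{m,λ} xⁿ / n! = eˣ φ^{(r)}_{m,λ}(x)`; over `ℝ` summability
is the same as absolute summability. -/

open Nat

lemma ff_natCast_s4 (n k : ℕ) : ff n k = n.descFactorial k := by
  rw [ff, ← descPochhammer_eval_eq_prod_range, descPochhammer_eval_eq_descFactorial]

theorem hasSum_descFactorial_mul_pow_div_factorial (k : ℕ) (x : ℝ) :
    HasSum (fun n : ℕ => n.descFactorial k * x ^ n / n !) (x ^ k * Real.exp x) := by
  refine (hasSum_nat_add_iff' k).mp ?_
  have hvanish : ∑ n ∈ range k, (n.descFactorial k * x ^ n / n ! : ℝ) = 0 :=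
    sum_eq_zero fun n hn => by simp [descFactorial_eq_zero_iff_lt.mpr (mem_range.mp hn)]
  have hshift (n : ℕ) :
      ((n + k).descFactorial k * x ^ (n + k) / (n + k)! : ℝ) = x ^ k * (x ^ n / n !) := by
    rw [← factorial_mul_descFactorial (le_add_self : k ≤ n + k), Nat.add_sub_cancel, pow_add]
    push_cast
    field_simp
  rw [hvanish, sub_zero, Real.exp_eq_exp_ℝ]
  simpa only [hshift] using (NormedSpace.expSeries_div_hasSum_exp x).mul_left (x ^ k)

theorem hasSum_sum_mul_descFactorial_mul_pow_div_factorial (s : Finset ℕ) (c : ℕ → ℝ) (x : ℝ) :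
    HasSum (fun n : ℕ => (∑ k ∈ s, c k * n.descFactorial k) * x ^ n / n !)
      ((∑ k ∈ s, c k * x ^ k) * Real.exp x) := by
  simp_rw [sum_mul, sum_div]
  refine hasSum_sum fun k _ => ?_
  simpa only [mul_assoc, mul_div_assoc] using
    (hasSum_descFactorial_mul_pow_div_factorial k x).mul_left (c k)

theorem statement_4_general (lam : ℝ) (m r : ℕ)
    (S : ℕ → ℕ → ℝ)
    (hS : ∀ (n : ℕ) (x : ℝ), dff lam (x + r) n = ∑ k ∈ Finset.range (n + 1), S n k * ff x k)
    (x : ℝ) :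
    Summable (fun n : ℕ => |dff lam ((n : ℝ) + r) m * x ^ n / n.factorial|) ∧
    ∑ k ∈ Finset.range (m + 1), S m k * x ^ k =
      Real.exp (-x) * ∑' n : ℕ, dff lam ((n : ℝ) + r) m * x ^ n / n.factorial := by
  have hsum : HasSum (fun n : ℕ => dff lam ((n : ℝ) + r) m * x ^ n / n.factorial)
      ((∑ k ∈ range (m + 1), S m k * x ^ k) * Real.exp x) := by
    simpa only [hS, ff_natCast_s4] using
      hasSum_sum_mul_descFactorial_mul_pow_div_factorial (range (m + 1)) (S m) x
  refine ⟨summable_abs_iff.mpr hsum.summable, ?_⟩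
  rw [hsum.tsum_eq, mul_left_comm, ← Real.exp_add, neg_add_cancel, Real.exp_zero, mul_one]

/-- for every real `x`, the series `∑_{n=0}^∞ (n+r)_{m,λ} x^n / n!` converges
absolutely and `φ^{(r)}_{m,λ}(x) = ∑_{k=0}^m {m+r brace k+r}_{r,λ} x^k
 = e^{-x} ∑_{n=0}^∞ (n+r)_{m,λ} x^n / n!`, where `S n k` denotes the degenerate
`r`-Stirling number of the second kind `{n+r brace k+r}_{r,λ}`, characterized by
`(x+r)_{n,λ} = ∑_{k=0}^n S n k (x)_k`. -/
theorem statement_4 (lam : ℝ) (hlam : lam ≠ 0) (m r : ℕ)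
    (S : ℕ → ℕ → ℝ)
    (hS : ∀ (n : ℕ) (x : ℝ), dff lam (x + r) n = ∑ k ∈ Finset.range (n + 1), S n k * ff x k)
    (x : ℝ) :
    Summable (fun n : ℕ => |dff lam ((n : ℝ) + r) m * x ^ n / n.factorial|) ∧
    ∑ k ∈ Finset.range (m + 1), S m k * x ^ k =
      Real.exp (-x) * ∑' n : ℕ, dff lam ((n : ℝ) + r) m * x ^ n / n.factorial :=
  statement_4_general lam m r S hS x

end
end

section
/- Fix a nonzero real number λ and an integer r ≥ 0. In the ring ℝ[x][[t]] of formal power series in t with coefficients in the polynomial ring ℝ[x], the series x·(e_λ(t) − 1) has zero constant term in t, so 1 − x·(e_λ(t) − 1) is invertible, and e_λ(t)^r · (1 − x·(e_λ(t) − 1))^{−1} = Σ_{n=0}^{∞} F^{(r)}_{n,λ}(x) t^n / n!. -/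
/-!
Expanding `(e_λ - 1)^k` binomially and using `e_λ(t)^m = ∑ (m)_{n,λ} tⁿ/n!` (a consequence of
the Vandermonde identity for degenerate falling factorials), `n!` times the coefficient of `tⁿ` in
`e_λ^r (e_λ - 1)^k` is the `k`-th forward difference at `0` of `m ↦ (m + r)_{n,λ}`, i.e. of
`∑ⱼ S n j (m)ⱼ`, which is `k! S n k`. Since `x (e_λ - 1)` has zero constant term, the geometric
series `∑ₖ xᵏ e_λ^r (e_λ - 1)^k` is coefficientwise finite, and multiplying it by
`1 - x (e_λ - 1)` telescopes to `e_λ^r`.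
-/

open Finset PowerSeries

noncomputable section

/-- The degenerate exponential `e_λ(t) = ∑_{n=0}^∞ (1)_{n,λ} t^n / n!`, viewed in the ring
`ℝ[x][[t]]` of formal power series with coefficients in the polynomial ring `ℝ[x]`. -/
def elamP (lam : ℝ) : PowerSeries (Polynomial ℝ) :=
  PowerSeries.mk fun n => Polynomial.C (dff lam 1 n / n.factorial)

lemma dff_succ (lam x : ℝ) (n : ℕ) : dff lam x (n + 1) = dff lam x n * (x - n * lam) :=
  prod_range_succ _ _

lemma dff_zero (lam x : ℝ) : dff lam x 0 = 1 := prod_range_zero _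

lemma dff_add (lam x y : ℝ) (n : ℕ) :
    dff lam (x + y) n =
      ∑ ij ∈ antidiagonal n, (n.choose ij.1 : ℝ) * (dff lam x ij.1 * dff lam y ij.2) := by
  induction n with
  | zero => simp [dff_zero]
  | succ n ih =>
    rw [sum_antidiagonal_choose_succ_mul (fun i j => dff lam x i * dff lam y j), dff_succ, ih,
      sum_mul, ← sum_add_distrib]
    refine sum_congr rfl fun ij hij => ?_
    obtain rfl := mem_antidiagonal.mp hij
    rw [Nat.choose_symm_add, dff_succ, dff_succ]
    push_cast
    ring

lemma ff_natCast_s5 (m j : ℕ) : ff m j = j.factorial * m.choose j := by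
  rw [ff, ← descPochhammer_eval_eq_prod_range, descPochhammer_eval_eq_descFactorial,
    Nat.descFactorial_eq_factorial_mul_choose, Nat.cast_mul]

lemma sum_range_alternating_choose_mul_choose (k j : ℕ) :
    ∑ m ∈ range (k + 1), (-1 : ℝ) ^ (k - m) * k.choose m * m.choose j =
      if k = j then 1 else 0 := by
  have h := fwdDiff_iter_choose_zero j k
  rw [fwdDiff_iter_eq_sum_shift] at h
  exact_mod_cast (by simpa using h)

lemma sum_range_alternating_choose_mul_ff (c : ℕ → ℝ) {n k : ℕ} (hk : k ≤ n) :
    ∑ m ∈ range (k + 1), (-1 : ℝ) ^ (k - m) * k.choose m * ∑ j ∈ range (n + 1), c j * ff m j =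
      k.factorial * c k := by
  calc _ = ∑ j ∈ range (n + 1), c j * j.factorial *
          ∑ m ∈ range (k + 1), (-1 : ℝ) ^ (k - m) * k.choose m * m.choose j := by
        simp_rw [mul_sum, ff_natCast_s5]
        rw [sum_comm]
        exact sum_congr rfl fun j _ => sum_congr rfl fun m _ => by ring
    _ = k.factorial * c k := by
        simp only [sum_range_alternating_choose_mul_choose, mul_ite, mul_one, mul_zero, sum_ite_eq,
          mem_range, Nat.lt_succ_iff.mpr hk, if_true]
        ring

lemma mk_div_factorial_mul_mk_div_factorial {K : Type*} [Field K] [CharZero K] (a b : ℕ → K) :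
    (mk fun n => a n / n.factorial) * (mk fun n => b n / n.factorial) =
      mk fun n => (∑ ij ∈ antidiagonal n, (n.choose ij.1 : K) * (a ij.1 * b ij.2)) /
        n.factorial := by
  ext n
  rw [coeff_mul, coeff_mk, sum_div]
  refine sum_congr rfl fun ij hij => ?_
  obtain rfl := mem_antidiagonal.mp hij
  have hfac : ((ij.1 + ij.2).factorial : K) ≠ 0 := Nat.cast_ne_zero.mpr (Nat.factorial_ne_zero _)
  rw [coeff_mk, coeff_mk, Nat.cast_add_choose]
  field_simp

def elam (lam : ℝ) : ℝ⟦X⟧ := mk fun n => dff lam 1 n / n.factorial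

lemma elamP_eq_map (lam : ℝ) : elamP lam = map Polynomial.C (elam lam) := by
  ext n
  simp [elamP, elam]

lemma elam_pow (lam : ℝ) (m : ℕ) : elam lam ^ m = mk fun n => dff lam m n / n.factorial := by
  induction m with
  | zero =>
    ext n
    cases n <;> simp [dff, coeff_one, prod_range_succ']
  | succ m ih =>
    rw [pow_succ, ih, elam, mk_div_factorial_mul_mk_div_factorial]
    push_cast
    simp_rw [dff_add]

lemma coeff_elam_pow_mul_elam_sub_one_pow (lam : ℝ) (r : ℕ) (S : ℕ → ℕ → ℝ)
    (hS : ∀ (n : ℕ) (x : ℝ), dff lam (x + r) n = ∑ k ∈ range (n + 1), S n k * ff x k)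
    {n k : ℕ} (hk : k ≤ n) :
    coeff n (elam lam ^ r * (elam lam - 1) ^ k) = S n k * k.factorial / n.factorial := by
  have hexpand : elam lam ^ r * (elam lam - 1) ^ k =
      ∑ m ∈ range (k + 1), C ((-1 : ℝ) ^ (k - m) * k.choose m) * elam lam ^ (m + r) := by
    rw [sub_eq_add_neg, add_pow, mul_sum]
    refine sum_congr rfl fun m _ => ?_
    simp only [map_mul, map_pow, map_neg, map_one, map_natCast, pow_add]
    ring
  rw [hexpand, map_sum]
  simp_rw [coeff_C_mul, elam_pow, coeff_mk, Nat.cast_add, hS, mul_div_assoc', ← sum_div,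
    sum_range_alternating_choose_mul_ff _ hk]
  ring

lemma coeff_elamP_pow_mul_elamP_sub_one_pow (lam : ℝ) (r : ℕ) (S : ℕ → ℕ → ℝ)
    (hS : ∀ (n : ℕ) (x : ℝ), dff lam (x + r) n = ∑ k ∈ range (n + 1), S n k * ff x k)
    {n k : ℕ} (hk : k ≤ n) :
    coeff n (elamP lam ^ r * (elamP lam - 1) ^ k) =
      Polynomial.C (S n k * k.factorial / n.factorial) := by
  have hmap : elamP lam ^ r * (elamP lam - 1) ^ k =
      PowerSeries.map Polynomial.C (elam lam ^ r * (elam lam - 1) ^ k) := by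
    simp [elamP_eq_map]
  rw [hmap, coeff_map, coeff_elam_pow_mul_elam_sub_one_pow lam r S hS hk]

section GeomSeries

variable {R : Type*} [CommRing R] {f : R⟦X⟧}

lemma coeff_mul_pow_eq_zero_of_lt (hf : constantCoeff f = 0) (a : R⟦X⟧) {n k : ℕ} (h : n < k) :
    coeff n (a * f ^ k) = 0 := by
  obtain ⟨g, rfl⟩ := X_dvd_iff.mpr hf
  rw [mul_pow, mul_left_comm, coeff_X_pow_mul', if_neg (not_le.mpr h)]

lemma mul_one_sub_eq_of_coeff_eq_sum_pow (hf : constantCoeff f = 0) {a F : R⟦X⟧}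
    (hF : ∀ n, coeff n F = ∑ k ∈ range (n + 1), coeff n (a * f ^ k)) : F * (1 - f) = a := by
  ext n
  have htrunc : ∀ i ≤ n, coeff i F = coeff i (a * ∑ k ∈ range (n + 1), f ^ k) := by
    intro i hi
    rw [hF, mul_sum, map_sum]
    refine sum_subset (range_subset_range.mpr (by omega)) fun k _ hk => ?_
    exact coeff_mul_pow_eq_zero_of_lt hf a (by simpa using hk)
  calc coeff n (F * (1 - f)) = coeff n (a * (∑ k ∈ range (n + 1), f ^ k) * (1 - f)) := by
        rw [coeff_mul, coeff_mul]
        exact sum_congr rfl fun ij hij => by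
          rw [htrunc ij.1 (HasAntidiagonal.antidiagonal.fst_le hij)]
    _ = coeff n a := by
        rw [mul_assoc, geom_sum_mul_neg, mul_sub, mul_one, map_sub,
          coeff_mul_pow_eq_zero_of_lt hf a (lt_add_one n), sub_zero]

end GeomSeries

theorem statement_5_general (lam : ℝ) (r : ℕ)
    (S : ℕ → ℕ → ℝ)
    (hS : ∀ (n : ℕ) (x : ℝ), dff lam (x + r) n = ∑ k ∈ Finset.range (n + 1), S n k * ff x k) :
    PowerSeries.constantCoeff (R := Polynomial ℝ)
        (PowerSeries.C (R := Polynomial ℝ) Polynomial.X * (elamP lam - 1)) = 0 ∧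
    IsUnit (1 - PowerSeries.C (R := Polynomial ℝ) Polynomial.X * (elamP lam - 1)) ∧
    elamP lam ^ r *
        Ring.inverse (1 - PowerSeries.C (R := Polynomial ℝ) Polynomial.X * (elamP lam - 1)) =
      PowerSeries.mk fun n => (n.factorial : ℝ)⁻¹ •
        ∑ k ∈ Finset.range (n + 1),
          Polynomial.C (S n k * k.factorial) * Polynomial.X ^ k := by
  have hconst : constantCoeff (C Polynomial.X * (elamP lam - 1)) = 0 := by
    simp [elamP, dff]
  have hunit : IsUnit (1 - C Polynomial.X * (elamP lam - 1)) := by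
    rw [isUnit_iff_constantCoeff, map_sub, map_one, hconst, sub_zero]
    exact isUnit_one
  refine ⟨hconst, hunit, ?_⟩
  refine ((Ring.eq_mul_inverse_iff_mul_eq _ _ _ hunit).mpr
    (mul_one_sub_eq_of_coeff_eq_sum_pow hconst fun n => ?_)).symm
  rw [coeff_mk, smul_sum]
  refine sum_congr rfl fun k hk => ?_
  rw [mul_pow, ← map_pow, mul_left_comm, coeff_C_mul,
    coeff_elamP_pow_mul_elamP_sub_one_pow lam r S hS (mem_range_succ_iff.mp hk),
    Polynomial.smul_eq_C_mul, div_eq_inv_mul]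
  simp only [Polynomial.C_mul]
  ring

/-- in `ℝ[x][[t]]`, the series `x·(e_λ(t) - 1)` has zero constant term, so
`1 - x·(e_λ(t) - 1)` is invertible, and
`e_λ(t)^r · (1 - x·(e_λ(t) - 1))⁻¹ = ∑_{n=0}^∞ F^{(r)}_{n,λ}(x) t^n / n!`, where
`F^{(r)}_{n,λ}(x) = ∑_{k=0}^n {n+r brace k+r}_{r,λ} k! x^k` and `S n k` denotes the
degenerate `r`-Stirling number of the second kind `{n+r brace k+r}_{r,λ}`, characterized by
`(x+r)_{n,λ} = ∑_{k=0}^n S n k (x)_k`. -/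
theorem statement_5 (lam : ℝ) (hlam : lam ≠ 0) (r : ℕ)
    (S : ℕ → ℕ → ℝ)
    (hS : ∀ (n : ℕ) (x : ℝ), dff lam (x + r) n = ∑ k ∈ Finset.range (n + 1), S n k * ff x k) :
    PowerSeries.constantCoeff (R := Polynomial ℝ)
        (PowerSeries.C (R := Polynomial ℝ) Polynomial.X * (elamP lam - 1)) = 0 ∧
    IsUnit (1 - PowerSeries.C (R := Polynomial ℝ) Polynomial.X * (elamP lam - 1)) ∧
    elamP lam ^ r *
        Ring.inverse (1 - PowerSeries.C (R := Polynomial ℝ) Polynomial.X * (elamP lam - 1)) =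
      PowerSeries.mk fun n => (n.factorial : ℝ)⁻¹ •
        ∑ k ∈ Finset.range (n + 1),
          Polynomial.C (S n k * k.factorial) * Polynomial.X ^ k :=
  statement_5_general lam r S hS
end
end

section
/- Fix a nonzero real number λ. For all integers n ≥ k ≥ 1, the degenerate Stirling numbers of the second kind satisfy the recurrence S_{2,λ}(n+1, k) = S_{2,λ}(n, k−1) + (k − nλ) · S_{2,λ}(n, k). -/
open Finset

noncomputable section

lemma ff_succ (x : ℝ) (k : ℕ) : ff x (k + 1) = ff x k * (x - k) := by
  unfold ff; rw [Finset.prod_range_succ]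

lemma ff_nat_eq_zero {k j : ℕ} (h : k < j) : ff (k : ℝ) j = 0 := by
  unfold ff
  apply Finset.prod_eq_zero (Finset.mem_range.mpr h)
  simp

lemma ff_nat_ne_zero (k : ℕ) : ff (k : ℝ) k ≠ 0 := by
  unfold ff
  rw [Finset.prod_ne_zero_iff]
  intro i hi
  have : (i : ℝ) < k := by exact_mod_cast Finset.mem_range.mp hi
  linarith

lemma ff_unique (m : ℕ) (c : ℕ → ℝ)
    (h : ∀ x : ℝ, ∑ j ∈ Finset.range m, c j * ff x j = 0) :
    ∀ k < m, c k = 0 := by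
  intro k
  induction k using Nat.strong_induction_on with
  | _ k ih =>
    intro hkm
    have hx := h (k : ℝ)
    have hsplit : ∑ j ∈ Finset.range m, c j * ff (k : ℝ) j = c k * ff (k : ℝ) k := by
      rw [Finset.sum_eq_single k]
      · intro j hj hjk
        rcases lt_or_gt_of_ne hjk with h1 | h2
        · rw [ih j h1 (lt_trans h1 hkm)]; ring
        · rw [ff_nat_eq_zero h2]; ring
      · intro hnot; exact absurd (Finset.mem_range.mpr hkm) hnot
    rw [hsplit] at hx
    exact (mul_eq_zero.mp hx).resolve_right (ff_nat_ne_zero k)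

/-- the degenerate Stirling numbers of the second kind `S2 n k = S_{2,λ}(n,k)`,
characterized by `(x)_{n,λ} = ∑_{k=0}^n S_{2,λ}(n,k) (x)_k`, satisfy the recurrence
`S_{2,λ}(n+1,k) = S_{2,λ}(n,k-1) + (k - nλ) S_{2,λ}(n,k)` for `n ≥ k ≥ 1`. -/
theorem statement_8 (lam : ℝ) (hlam : lam ≠ 0)
    (S2 : ℕ → ℕ → ℝ)
    (hS2 : ∀ (n : ℕ) (x : ℝ), dff lam x n = ∑ k ∈ Finset.range (n + 1), S2 n k * ff x k)
    (n k : ℕ) (hk : 1 ≤ k) (hkn : k ≤ n) :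
    S2 (n + 1) k = S2 n (k - 1) + ((k : ℝ) - n * lam) * S2 n k := by
  set g : ℕ → ℝ := fun j =>
    (if 1 ≤ j then S2 n (j - 1) else 0) +
    (if j ≤ n then ((j : ℝ) - n * lam) * S2 n j else 0) with hg
  have key : ∀ x : ℝ, ∑ j ∈ Finset.range (n + 2), g j * ff x j = dff lam x (n + 1) := by
    intro x
    have h1 : dff lam x (n + 1) = dff lam x n * (x - n * lam) := by
      unfold dff; rw [Finset.prod_range_succ]
    rw [h1, hS2 n x]
    have hsplit : ∑ j ∈ Finset.range (n + 2), g j * ff x j =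
        (∑ j ∈ Finset.range (n + 2), (if 1 ≤ j then S2 n (j - 1) else 0) * ff x j) +
        (∑ j ∈ Finset.range (n + 2), (if j ≤ n then ((j : ℝ) - n * lam) * S2 n j else 0) * ff x j) := by
      rw [← Finset.sum_add_distrib]
      apply Finset.sum_congr rfl
      intro j _; rw [hg]; ring
    rw [hsplit]
    have ha : (∑ j ∈ Finset.range (n + 2), (if 1 ≤ j then S2 n (j - 1) else 0) * ff x j) =
        ∑ j ∈ Finset.range (n + 1), S2 n j * ff x (j + 1) := by
      rw [Finset.sum_range_succ']
      simp
    have hb : (∑ j ∈ Finset.range (n + 2), (if j ≤ n then ((j : ℝ) - n * lam) * S2 n j else 0) * ff x j) =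
        ∑ j ∈ Finset.range (n + 1), ((j : ℝ) - n * lam) * S2 n j * ff x j := by
      rw [Finset.sum_range_succ]
      have hnn : ¬ (n + 1 ≤ n) := by omega
      rw [if_neg hnn]
      simp only [zero_mul, add_zero]
      apply Finset.sum_congr rfl
      intro j hj
      rw [if_pos (Nat.lt_succ_iff.mp (Finset.mem_range.mp hj))]
    rw [ha, hb, ← Finset.sum_add_distrib, Finset.sum_mul]
    apply Finset.sum_congr rfl
    intro j _
    rw [ff_succ]
    ring
  have hzero : ∀ x : ℝ, ∑ j ∈ Finset.range (n + 2), (S2 (n + 1) j - g j) * ff x j = 0 := by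
    intro x
    have := key x
    rw [hS2 (n + 1) x] at this
    simp only [sub_mul, Finset.sum_sub_distrib]
    rw [this]
    ring
  have := ff_unique (n + 2) _ hzero k (by omega)
  have hgk : g k = S2 n (k - 1) + ((k : ℝ) - n * lam) * S2 n k := by
    rw [hg]
    simp only [if_pos hk, if_pos hkn]
  linarith [this, hgk.symm ▸ this]
end
end

section
/- Fix a nonzero real number λ. For every integer n ≥ 0, the degenerate Fubini polynomials satisfy the polynomial identity x · F'_{n,λ}(x) + x · (d/dx)(x · F_{n,λ}(x)) − nλ · F_{n,λ}(x) = F_{n+1,λ}(x), where ' denotes the formal derivative of polynomials. -/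
open Finset Polynomial

noncomputable section

def ffp (k : ℕ) : Polynomial ℝ := ∏ i ∈ Finset.range k, (X - C (i : ℝ))

def dffp (lam : ℝ) (n : ℕ) : Polynomial ℝ := ∏ i ∈ Finset.range n, (X - C ((i : ℝ) * lam))

lemma ffp_eval (x : ℝ) (k : ℕ) : (ffp k).eval x = ff x k := by
  simp [ffp, ff, eval_prod]

lemma dffp_eval (lam x : ℝ) (n : ℕ) : (dffp lam n).eval x = dff lam x n := by
  simp [dffp, dff, eval_prod]

lemma ffp_monic (k : ℕ) : (ffp k).Monic :=
  monic_prod_of_monic _ _ fun i _ => monic_X_sub_C _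

lemma ffp_natDegree (k : ℕ) : (ffp k).natDegree = k := by
  rw [ffp, natDegree_prod]
  · calc ∑ i ∈ range k, (X - C (i:ℝ)).natDegree = ∑ _i ∈ range k, 1 :=
        Finset.sum_congr rfl fun i _ => natDegree_X_sub_C _
      _ = k := by simp
  · intro i _; exact X_sub_C_ne_zero _

lemma ffp_indep (N : ℕ) (c : ℕ → ℝ)
    (h : ∑ k ∈ range N, C (c k) * ffp k = 0) : ∀ k < N, c k = 0 := by
  induction N with
  | zero => intro k hk; omega
  | succ N ih =>
    have hN : c N = 0 := by
      have h1 := congrArg (fun p => Polynomial.coeff p N) h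
      simp only [finset_sum_coeff, coeff_zero] at h1
      rw [Finset.sum_range_succ] at h1
      have hz : ∀ k ∈ range N, (C (c k) * ffp k).coeff N = 0 := by
        intro k hk
        rw [coeff_C_mul, coeff_eq_zero_of_natDegree_lt, mul_zero]
        rw [ffp_natDegree]; exact mem_range.mp hk
      rw [Finset.sum_eq_zero hz, zero_add, coeff_C_mul] at h1
      have hl : (ffp N).coeff N = 1 := by
        have := (ffp_monic N).leadingCoeff
        rwa [Polynomial.leadingCoeff, ffp_natDegree] at this
      rwa [hl, mul_one] at h1
    intro k hk
    rcases Nat.lt_succ_iff_lt_or_eq.mp hk with h' | h'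
    · refine ih ?_ k h'
      rw [Finset.sum_range_succ, hN] at h; simpa using h
    · rw [h']; exact hN

lemma ffp_unique (N : ℕ) (c d : ℕ → ℝ)
    (h : ∑ k ∈ range N, C (c k) * ffp k = ∑ k ∈ range N, C (d k) * ffp k) :
    ∀ k < N, c k = d k := by
  intro k hk
  have : c k - d k = 0 := ffp_indep N (fun k => c k - d k) ?_ k hk
  · linarith
  · simp only [map_sub, sub_mul]
    rw [Finset.sum_sub_distrib, h, sub_self]

lemma hS2p (lam : ℝ) (S2 : ℕ → ℕ → ℝ)
    (hS2 : ∀ (n : ℕ) (x : ℝ), dff lam x n = ∑ k ∈ Finset.range (n + 1), S2 n k * ff x k)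
    (n : ℕ) :
    dffp lam n = ∑ k ∈ range (n+1), C (S2 n k) * ffp k := by
  apply Polynomial.funext
  intro x
  rw [dffp_eval, hS2]
  simp [eval_finset_sum, ffp_eval]

lemma S2_rec (lam : ℝ) (S2 : ℕ → ℕ → ℝ)
    (hS2 : ∀ (n : ℕ) (x : ℝ), dff lam x n = ∑ k ∈ Finset.range (n + 1), S2 n k * ff x k)
    (n : ℕ) : ∀ j < n + 2, S2 (n+1) j =
      (if j = 0 then 0 else S2 n (j-1)) +
      (if j ≤ n then ((j:ℝ) - n * lam) * S2 n j else 0) := by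
  apply ffp_unique
  rw [← hS2p lam S2 hS2 (n+1)]
  have h1 : dffp lam (n+1) = dffp lam n * (X - C ((n:ℝ)*lam)) := by
    rw [dffp, Finset.prod_range_succ]; rfl
  rw [h1, hS2p lam S2 hS2 n, Finset.sum_mul]
  have lhs_eq : ∑ k ∈ range (n+1), C (S2 n k) * ffp k * (X - C ((n:ℝ)*lam))
      = ∑ k ∈ range (n+1),
        (C (S2 n k) * ffp (k+1) + C (((k:ℝ) - n*lam) * S2 n k) * ffp k) := by
    apply Finset.sum_congr rfl
    intro k _
    have hf : ffp (k+1) = ffp k * (X - C (k:ℝ)) := by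
      rw [ffp, Finset.prod_range_succ]; rfl
    rw [hf]
    simp only [map_sub, map_mul]
    ring
  rw [lhs_eq]
  have rhs_eq :
      ∑ j ∈ range (n+2), C ((if j = 0 then (0:ℝ) else S2 n (j-1))
          + (if j ≤ n then ((j:ℝ) - n*lam) * S2 n j else 0)) * ffp j
      = ∑ k ∈ range (n+1),
        (C (S2 n k) * ffp (k+1) + C (((k:ℝ) - n*lam) * S2 n k) * ffp k) := by
    simp only [map_add, add_mul]
    rw [Finset.sum_add_distrib, Finset.sum_add_distrib]
    congr 1
    · rw [Finset.sum_range_succ']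
      simp
    · rw [Finset.sum_range_succ, if_neg (by omega)]
      simp only [map_zero, zero_mul, add_zero]
      apply Finset.sum_congr rfl
      intro k hk
      rw [if_pos (by exact Nat.lt_succ_iff.mp (mem_range.mp hk))]
  rw [rhs_eq]

/-- the degenerate Fubini polynomials
`F_{n,λ}(x) = ∑_{k=0}^n S_{2,λ}(n,k) k! x^k` (where the degenerate Stirling numbers of the
second kind `S2 n k = S_{2,λ}(n,k)` are characterized by
`(x)_{n,λ} = ∑_{k=0}^n S_{2,λ}(n,k) (x)_k`) satisfy the differential equation
`x F'_{n,λ}(x) + x (x F_{n,λ}(x))' - nλ F_{n,λ}(x) = F_{n+1,λ}(x)`. -/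
theorem statement_9 (lam : ℝ) (hlam : lam ≠ 0)
    (S2 : ℕ → ℕ → ℝ)
    (hS2 : ∀ (n : ℕ) (x : ℝ), dff lam x n = ∑ k ∈ Finset.range (n + 1), S2 n k * ff x k)
    (F : ℕ → Polynomial ℝ)
    (hF : ∀ n, F n = ∑ k ∈ Finset.range (n + 1),
      Polynomial.C (S2 n k * k.factorial) * Polynomial.X ^ k)
    (n : ℕ) :
    Polynomial.X * (F n).derivative + Polynomial.X * (Polynomial.X * F n).derivative -
        ((n : ℝ) * lam) • F n = F (n + 1) := by
  have hrec := S2_rec lam S2 hS2 n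
  rw [hF n, hF (n+1)]
  -- rewrite RHS
  have hRHS : ∑ j ∈ range (n+1+1), C (S2 (n+1) j * j.factorial) * X ^ j
      = (∑ k ∈ range (n+1), C (S2 n k * (k+1).factorial) * X ^ (k+1))
        + ∑ k ∈ range (n+1), C (((k:ℝ) - n*lam) * (S2 n k * k.factorial)) * X ^ k := by
    have step1 : ∑ j ∈ range (n+2), C (S2 (n+1) j * j.factorial) * X ^ j
        = ∑ j ∈ range (n+2),
            (C (if j = 0 then (0:ℝ) else S2 n (j-1) * j.factorial) * X ^ j
             + C (if j ≤ n then ((j:ℝ) - n*lam) * (S2 n j * j.factorial) else 0) * X ^ j) := by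
      apply Finset.sum_congr rfl
      intro j hj
      rw [hrec j (mem_range.mp hj), ← add_mul, ← map_add]
      congr 2
      split_ifs <;> push_cast <;> ring
    rw [step1, Finset.sum_add_distrib]
    congr 1
    · rw [Finset.sum_range_succ']
      simp
    · rw [Finset.sum_range_succ, if_neg (by omega)]
      simp only [map_zero, zero_mul, add_zero]
      apply Finset.sum_congr rfl
      intro k hk
      rw [if_pos (Nat.lt_succ_iff.mp (mem_range.mp hk))]
  rw [hRHS]
  -- LHS term 1: X * derivative
  have hd1 : X * Polynomial.derivative (∑ k ∈ range (n+1), C (S2 n k * k.factorial) * X ^ k)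
      = ∑ k ∈ range (n+1), C ((k:ℝ) * (S2 n k * k.factorial)) * X ^ k := by
    rw [derivative_sum, Finset.mul_sum]
    apply Finset.sum_congr rfl
    intro k _
    rw [derivative_C_mul_X_pow]
    cases k with
    | zero => simp
    | succ m =>
      simp only [Nat.add_sub_cancel]
      rw [show X * (C (S2 n (m+1) * ((m+1).factorial : ℝ) * (m+1:ℕ)) * X ^ m)
        = C (S2 n (m+1) * ((m+1).factorial : ℝ) * ((m+1:ℕ):ℝ)) * X ^ (m+1) by
          rw [pow_succ]; ring]
      push_cast
      ring_nf
  have hd2 : X * Polynomial.derivative (X * ∑ k ∈ range (n+1), C (S2 n k * k.factorial) * X ^ k)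
      = ∑ k ∈ range (n+1), C (((k:ℝ)+1) * (S2 n k * k.factorial)) * X ^ (k+1) := by
    have hx : X * ∑ k ∈ range (n+1), C (S2 n k * k.factorial) * X ^ k
        = ∑ k ∈ range (n+1), C (S2 n k * k.factorial) * X ^ (k+1) := by
      rw [Finset.mul_sum]
      apply Finset.sum_congr rfl
      intro k _
      rw [pow_succ]; ring
    rw [hx, derivative_sum, Finset.mul_sum]
    apply Finset.sum_congr rfl
    intro k _
    rw [derivative_C_mul_X_pow]
    simp only [Nat.add_sub_cancel]
    rw [pow_succ]
    push_cast
    ring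
  have hd3 : ((n:ℝ) * lam) • (∑ k ∈ range (n+1), C (S2 n k * k.factorial) * X ^ k)
      = ∑ k ∈ range (n+1), C ((n:ℝ) * lam * (S2 n k * k.factorial)) * X ^ k := by
    rw [Finset.smul_sum]
    apply Finset.sum_congr rfl
    intro k _
    rw [smul_eq_C_mul, ← mul_assoc, ← map_mul]
  rw [hd1, hd2, hd3]
  have e1 : (∑ k ∈ range (n+1), C ((k:ℝ) * (S2 n k * k.factorial)) * X ^ k)
      - ∑ k ∈ range (n+1), C ((n:ℝ) * lam * (S2 n k * k.factorial)) * X ^ k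
      = ∑ k ∈ range (n+1), C (((k:ℝ) - n*lam) * (S2 n k * k.factorial)) * X ^ k := by
    rw [← Finset.sum_sub_distrib]
    apply Finset.sum_congr rfl
    intro k _
    rw [← sub_mul, ← map_sub]
    congr 2
    ring
  have e2 : (∑ k ∈ range (n+1), C (((k:ℝ)+1) * (S2 n k * k.factorial)) * X ^ (k+1))
      = ∑ k ∈ range (n+1), C (S2 n k * (k+1).factorial) * X ^ (k+1) := by
    apply Finset.sum_congr rfl
    intro k _
    congr 2
    push_cast [Nat.factorial_succ]
    ring
  linear_combination e1 + e2
end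
end

section
/- Fix a nonzero real number λ. For all integers n ≥ 1 and r ≥ 1: n! · H^{(r)}_{n,λ} = [n+r brack r+1]_{r,λ}, i.e., the degenerate hyperharmonic number H^{(r)}_{n,λ} times n! equals the degenerate unsigned r-Stirling number of the first kind with parameters (n+r, r+1). -/
/-!
Both sides are read off the closed form `λ · n! · H^{(r)}_{n,λ} = ⟨r⟩_n - ⟨r-λ⟩_n`.
For `r = 1` it follows from `⟨-λ⟩_k = (-1)^k k! C(λ,k)`, and the passage from `r` to `r + 1`
is the hockey-stick identity `∑_{k=1}^n ⟨x⟩_k / k! = ⟨x+1⟩_n / n! - 1`.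
On the Stirling side, evaluating the defining expansion at `x = 0` kills every
`⟨x⟩_{k,λ}` with `k ≥ 1`, and at `x = -λ` every one with `k ≥ 2`, so that
`B n 0 = ⟨r⟩_n` and `⟨r-λ⟩_n = B n 0 - λ B n 1`.
-/

open Finset

noncomputable section

/-- The generalized binomial coefficient `C(x,k) = x(x-1)⋯(x-k+1)/k!`. -/
def gbinom (x : ℝ) (k : ℕ) : ℝ := (∏ i ∈ Finset.range k, (x - i)) / k.factorial

/-- The degenerate harmonic numbers `H_{n,λ} = ∑_{k=1}^n (-1)^{k-1} (1/λ) C(λ,k)`,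
with `H_{0,λ} = 0`. -/
def dH (lam : ℝ) (n : ℕ) : ℝ :=
  ∑ k ∈ Finset.Icc 1 n, (-1 : ℝ) ^ (k - 1) * (1 / lam) * gbinom lam k

/-- The degenerate hyperharmonic numbers: `H^{(1)}_{n,λ} = H_{n,λ}`, `H^{(r)}_{0,λ} = 0`, and
`H^{(r)}_{n,λ} = ∑_{k=1}^n H^{(r-1)}_{k,λ}` for `r ≥ 2`, `n ≥ 1`.
(The value at `r = 0` is junk.) -/
def dHyper (lam : ℝ) : ℕ → ℕ → ℝ
  | 0, _ => 0
  | 1, n => dH lam n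
  | (r + 2), n => ∑ k ∈ Finset.Icc 1 n, dHyper lam (r + 1) k

/-- The rising factorial `⟨x⟩_n = x(x+1)⋯(x+n-1)`. -/
def rise (x : ℝ) (n : ℕ) : ℝ := ∏ i ∈ Finset.range n, (x + i)

/-- The degenerate rising factorial `⟨x⟩_{n,λ} = x(x+λ)⋯(x+(n-1)λ)`. -/
def drise (lam x : ℝ) (n : ℕ) : ℝ := ∏ i ∈ Finset.range n, (x + i * lam)

open Nat

lemma rise_succ (x : ℝ) (n : ℕ) : rise x (n + 1) = rise x n * (x + n) :=
  prod_range_succ _ n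

lemma rise_succ' (x : ℝ) (n : ℕ) : rise x (n + 1) = x * rise (x + 1) n := by
  simp only [rise, prod_range_succ', cast_add, cast_one, cast_zero, add_zero]
  rw [mul_comm]
  congr 1
  exact prod_congr rfl fun i _ => by ring

lemma rise_one (n : ℕ) : rise 1 n = n ! := by
  induction n with
  | zero => simp [rise]
  | succ n ih => rw [rise_succ, ih, factorial_succ]; push_cast; ring

lemma rise_neg (x : ℝ) (k : ℕ) : rise (-x) k = (-1) ^ k * k ! * gbinom x k := by
  have hk : (k ! : ℝ) ≠ 0 := by positivity
  rw [rise, gbinom, mul_assoc, mul_div_cancel₀ _ hk]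
  nth_rw 2 [← card_range k]
  rw [pow_card_mul_prod]
  exact prod_congr rfl fun i _ => by ring

lemma sum_Icc_rise_div_factorial (x : ℝ) (n : ℕ) :
    ∑ k ∈ Icc 1 n, rise x k / k ! = rise (x + 1) n / (n ! : ℝ) - 1 := by
  induction n with
  | zero => simp [rise]
  | succ n ih =>
    rw [sum_Icc_succ_top (by omega), ih, rise_succ' x n, rise_succ (x + 1) n, factorial_succ]
    field_simp
    push_cast
    ring

lemma dH_eq (lam : ℝ) (n : ℕ) :
    dH lam n = (rise 1 n - rise (1 - lam) n) / (lam * n !) := by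
  have hterm : ∀ k ∈ Icc 1 n, (-1 : ℝ) ^ (k - 1) * (1 / lam) * gbinom lam k
      = -(rise (-lam) k / k ! / lam) := by
    intro k hk
    obtain ⟨j, rfl⟩ : ∃ j, k = j + 1 := ⟨k - 1, by grind⟩
    have hfac : ((j + 1) ! : ℝ) ≠ 0 := by positivity
    rw [rise_neg, Nat.add_sub_cancel, pow_succ]
    field_simp
  have hfac : (n ! : ℝ) ≠ 0 := by positivity
  rw [dH, sum_congr rfl hterm, sum_neg_distrib, ← sum_div, sum_Icc_rise_div_factorial, rise_one,
    neg_add_eq_sub]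
  field_simp
  ring

lemma dHyper_succ (lam : ℝ) {r : ℕ} (hr : 1 ≤ r) (n : ℕ) :
    dHyper lam (r + 1) n = ∑ k ∈ Icc 1 n, dHyper lam r k := by
  obtain ⟨s, rfl⟩ : ∃ s, r = s + 1 := ⟨r - 1, by omega⟩
  rfl

lemma dHyper_eq (lam : ℝ) {r : ℕ} (hr : 1 ≤ r) (n : ℕ) :
    dHyper lam r n = (rise r n - rise (r - lam) n) / (lam * n !) := by
  induction r, hr using Nat.le_induction generalizing n with
  | base => exact_mod_cast dH_eq lam n
  | succ r hr ih =>
    have hsplit : ∀ k, (rise r k - rise (r - lam) k) / (lam * k !)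
        = (rise r k / (k ! : ℝ) - rise (r - lam) k / (k ! : ℝ)) / lam := fun k => by ring
    have hfac : (n ! : ℝ) ≠ 0 := by positivity
    simp only [dHyper_succ lam hr, ih, hsplit, ← sum_div, sum_sub_distrib,
      sum_Icc_rise_div_factorial]
    rw [sub_add_eq_add_sub, cast_succ]
    field_simp
    ring

lemma drise_zero_of_pos (lam : ℝ) {k : ℕ} (hk : 0 < k) : drise lam 0 k = 0 :=
  prod_eq_zero (mem_range.2 hk) (by simp)

lemma drise_neg_self_of_two_le (lam : ℝ) {k : ℕ} (hk : 2 ≤ k) : drise lam (-lam) k = 0 :=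
  prod_eq_zero (i := 1) (mem_range.2 hk) (by simp)

lemma sum_mul_drise_zero (lam : ℝ) (c : ℕ → ℝ) (n : ℕ) :
    ∑ k ∈ range (n + 1), c k * drise lam 0 k = c 0 := by
  rw [sum_range_succ', sum_eq_zero fun k _ => by rw [drise_zero_of_pos lam k.succ_pos, mul_zero]]
  simp [drise]

lemma sum_mul_drise_neg_self (lam : ℝ) (c : ℕ → ℝ) {n : ℕ} (hn : 1 ≤ n) :
    ∑ k ∈ range (n + 1), c k * drise lam (-lam) k = c 0 - lam * c 1 := by
  obtain ⟨m, rfl⟩ : ∃ m, n = m + 1 := ⟨n - 1, by omega⟩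
  rw [sum_range_succ', sum_range_succ',
    sum_eq_zero fun k _ => by rw [drise_neg_self_of_two_le lam (by omega), mul_zero]]
  simp only [drise, zero_add, range_one, prod_singleton, range_zero, prod_empty]
  ring

/-- `B n k` stands for `[n+r brack k+r]_{r,λ}`, so `B n 1` is `[n+r brack r+1]_{r,λ}`. -/
theorem statement_10 (lam : ℝ) (hlam : lam ≠ 0) (r : ℕ) (hr : 1 ≤ r)
    (B : ℕ → ℕ → ℝ)
    (hB : ∀ (n : ℕ) (x : ℝ),
      rise (x + r) n = ∑ k ∈ Finset.range (n + 1), B n k * drise lam x k)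
    (n : ℕ) (hn : 1 ≤ n) :
    (n.factorial : ℝ) * dHyper lam r n = B n 1 := by
  have hB0 : rise r n = B n 0 := by
    simpa [sum_mul_drise_zero] using hB n 0
  have hB1 : rise (r - lam) n = B n 0 - lam * B n 1 := by
    simpa [sum_mul_drise_neg_self lam _ hn, neg_add_eq_sub] using hB n (-lam)
  have hfac : (n ! : ℝ) ≠ 0 := by positivity
  rw [dHyper_eq lam hr, hB0, hB1]
  field_simp
  ring
end
end

section
/- Fix a nonzero real number λ. Let g(t) = −(1−t)^{−1} · log_λ(1−t) ∈ ℝ[[t]]. Then for every integer k ≥ 1, the k-th formal derivative satisfies g^{(k)}(t) = k! · (1−t)^{−(k+1)} · (H_{k,λ} − C(k−λ,k) · log_λ(1−t)), where C(k−λ,k) = (k−λ)(k−1−λ)···(1−λ)/k!. In particular, the constant term of g^{(k)} equals k! · H_{k,λ}. -/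
open Finset PowerSeries

noncomputable section

/-- The degenerate logarithm evaluated at `1 - t`: the formal power series
`log_λ(1-t) = ∑_{n≥1} (1/λ) C(λ,n) (-t)^n` in `ℝ[[t]]`. -/
def dlogNeg (lam : ℝ) : PowerSeries ℝ :=
  PowerSeries.mk fun n => if n = 0 then 0 else (-1 : ℝ) ^ n * (1 / lam) * gbinom lam n

/-! The derivative of `L = log_λ(1 - t)` satisfies `(1 - t) L' = -(1 + λ L)` (the series
`1 + λ L` is `(1 - t)^λ`), and `((1 - t)⁻¹)' = (1 - t)⁻²`. Differentiating the claimed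
formula for `g^{(k)}` therefore again gives `(1 - t)^{-(k+2)}` times an affine function of `L`;
matching its coefficients with the formula for `k + 1` reduces to the recurrences
`(k+1) H_{k+1,λ} = (k+1) H_{k,λ} + C(k-λ,k)` and `(k+1) C(k+1-λ,k+1) = (k+1-λ) C(k-λ,k)`,
which follow from Pascal's rule and absorption for generalized binomial coefficients. -/

lemma gbinom_zero (x : ℝ) : gbinom x 0 = 1 := by
  simp [gbinom]

lemma gbinom_succ_right_eq (x : ℝ) (k : ℕ) :
    gbinom x (k + 1) * (k + 1) = gbinom x k * (x - k) := by
  unfold gbinom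
  rw [prod_range_succ, Nat.factorial_succ]
  push_cast
  field_simp

lemma gbinom_succ_mul_succ (x : ℝ) (k : ℕ) :
    gbinom x (k + 1) * (k + 1) = x * gbinom (x - 1) k := by
  have hprod : ∏ i ∈ range k, (x - ((i + 1 : ℕ) : ℝ)) = ∏ i ∈ range k, (x - 1 - i) :=
    prod_congr rfl fun i _ => by push_cast; ring
  unfold gbinom
  rw [prod_range_succ', hprod, Nat.factorial_succ]
  push_cast
  field_simp
  ring

lemma gbinom_succ_eq_add (x : ℝ) (k : ℕ) :
    gbinom x (k + 1) = gbinom (x - 1) (k + 1) + gbinom (x - 1) k := by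
  have h₁ := gbinom_succ_right_eq (x - 1) k
  have h₂ := gbinom_succ_mul_succ x k
  have hk : (k : ℝ) + 1 ≠ 0 := by positivity
  apply mul_right_cancel₀ hk
  linear_combination h₂ - h₁

lemma gbinom_natCast_sub_self (x : ℝ) (k : ℕ) :
    gbinom (k - x) k = (-1) ^ k * gbinom (x - 1) k := by
  induction k with
  | zero => simp [gbinom_zero]
  | succ k ih =>
    have hk : (k : ℝ) + 1 ≠ 0 := by positivity
    apply mul_right_cancel₀ hk
    have h₁ := gbinom_succ_mul_succ ((k + 1 : ℕ) - x) k
    have h₂ := gbinom_succ_right_eq (x - 1) k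
    rw [show ((k + 1 : ℕ) : ℝ) - x - 1 = k - x by push_cast; ring, ih] at h₁
    push_cast at h₁ ⊢
    linear_combination h₁ - (-1) ^ (k + 1) * h₂

lemma dH_succ (lam : ℝ) (k : ℕ) :
    dH lam (k + 1) = dH lam k + (-1) ^ k * (1 / lam) * gbinom lam (k + 1) := by
  rw [dH, sum_Icc_succ_top (by omega), Nat.add_sub_cancel]
  rfl

lemma dH_succ_mul_succ (lam : ℝ) (hlam : lam ≠ 0) (k : ℕ) :
    dH lam (k + 1) * (k + 1) = dH lam k * (k + 1) + gbinom (k - lam) k := by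
  rw [dH_succ, gbinom_natCast_sub_self]
  have := gbinom_succ_mul_succ lam k
  field_simp
  linear_combination (-1) ^ k * this

lemma coeff_dlogNeg_succ (lam : ℝ) (n : ℕ) :
    coeff (n + 1) (dlogNeg lam) = (-1) ^ (n + 1) * (1 / lam) * gbinom lam (n + 1) := by
  simp [dlogNeg]

lemma one_sub_X_mul_derivative_dlogNeg (lam : ℝ) (hlam : lam ≠ 0) :
    (1 - X) * d⁄dX ℝ (dlogNeg lam) = -(C lam * dlogNeg lam + 1) := by
  ext n
  rw [sub_mul, one_mul, map_sub, coeff_derivative, map_neg, map_add, coeff_C_mul, coeff_one]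
  rcases n with _ | n
  · simp [gbinom, dlogNeg]
    field_simp
  · rw [coeff_succ_X_mul, coeff_derivative, coeff_dlogNeg_succ, coeff_dlogNeg_succ,
      if_neg n.succ_ne_zero]
    have h₁ := gbinom_succ_mul_succ lam (n + 1)
    have h₂ := gbinom_succ_mul_succ lam n
    have h₃ := gbinom_succ_eq_add lam n
    push_cast at h₁ ⊢
    field_simp
    linear_combination (-1) ^ n * (h₁ + h₂) - (-1) ^ n * lam * h₃

lemma derivative_inv_one_sub_X {K : Type*} [Field K] :
    d⁄dX K (1 - X : K⟦X⟧)⁻¹ = (1 - X)⁻¹ ^ 2 := by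
  simp

lemma derivative_dlogNeg (lam : ℝ) (hlam : lam ≠ 0) :
    d⁄dX ℝ (dlogNeg lam) = -((1 - X)⁻¹ * (C lam * dlogNeg lam + 1)) :=
  calc d⁄dX ℝ (dlogNeg lam) = (1 - X)⁻¹ * ((1 - X) * d⁄dX ℝ (dlogNeg lam)) := by
        rw [← mul_assoc, PowerSeries.inv_mul_cancel _ (by simp), one_mul]
    _ = -((1 - X)⁻¹ * (C lam * dlogNeg lam + 1)) := by
        rw [one_sub_X_mul_derivative_dlogNeg lam hlam, mul_neg]

theorem iterate_derivative_neg_inv_one_sub_X_mul_dlogNeg (lam : ℝ) (hlam : lam ≠ 0) (k : ℕ) :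
    (d⁄dX ℝ)^[k] (-((1 - X)⁻¹ * dlogNeg lam)) =
      (k.factorial : ℝ) •
        ((1 - X)⁻¹ ^ (k + 1) * (C (dH lam k) - C (gbinom (k - lam) k) * dlogNeg lam)) := by
  induction k with
  | zero => simp [dH, gbinom_zero]
  | succ k ih =>
    have hH := congrArg C (dH_succ_mul_succ lam hlam k)
    have hB := congrArg C (gbinom_succ_mul_succ ((k + 1 : ℕ) - lam) k)
    rw [show ((k + 1 : ℕ) : ℝ) - lam - 1 = k - lam by push_cast; ring] at hB
    rw [Function.iterate_succ_apply', ih, Derivation.map_smul, Derivation.leibniz, map_sub,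
      Derivation.leibniz, derivative_pow, derivative_inv_one_sub_X,
      derivative_dlogNeg lam hlam, Nat.factorial_succ]
    simp only [smul_eq_C_mul, smul_eq_mul, map_mul, map_add, map_sub, map_natCast, map_one,
      Nat.cast_mul, Nat.cast_add, Nat.cast_one, derivative_C, mul_zero, add_zero, Nat.add_sub_cancel] at hH hB ⊢
    linear_combination (-(k.factorial : ℝ⟦X⟧) * (1 - X)⁻¹ ^ (k + 2)) *
      (hH - hB * dlogNeg lam)

theorem statement_13_general (lam : ℝ) (hlam : lam ≠ 0)
    (g : PowerSeries ℝ)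
    (hg : g = -((1 - PowerSeries.X : PowerSeries ℝ)⁻¹ * dlogNeg lam))
    (k : ℕ) :
    (derivativeFun (R := ℝ))^[k] g =
      (k.factorial : ℝ) •
        (((1 - PowerSeries.X : PowerSeries ℝ)⁻¹) ^ (k + 1) *
          (PowerSeries.C (R := ℝ) (dH lam k) -
            PowerSeries.C (R := ℝ) (gbinom ((k : ℝ) - lam) k) * dlogNeg lam)) ∧
    PowerSeries.constantCoeff (R := ℝ) ((derivativeFun (R := ℝ))^[k] g) =
      k.factorial * dH lam k := by
  have hformula : (derivativeFun (R := ℝ))^[k] g = _ :=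
    hg ▸ iterate_derivative_neg_inv_one_sub_X_mul_dlogNeg lam hlam k
  refine ⟨hformula, ?_⟩
  simp [hformula, smul_eq_C_mul, constantCoeff_inv, dlogNeg]

/-- let `g(t) = -(1-t)⁻¹ log_λ(1-t)`. For every `k ≥ 1`, the `k`-th formal
derivative satisfies
`g^{(k)}(t) = k! (1-t)^{-(k+1)} (H_{k,λ} - C(k-λ,k) log_λ(1-t))`, and in particular the
constant term of `g^{(k)}` equals `k! H_{k,λ}`. -/
theorem statement_13 (lam : ℝ) (hlam : lam ≠ 0)
    (g : PowerSeries ℝ)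
    (hg : g = -((1 - PowerSeries.X : PowerSeries ℝ)⁻¹ * dlogNeg lam))
    (k : ℕ) (hk : 1 ≤ k) :
    (derivativeFun (R := ℝ))^[k] g =
      (k.factorial : ℝ) •
        (((1 - PowerSeries.X : PowerSeries ℝ)⁻¹) ^ (k + 1) *
          (PowerSeries.C (R := ℝ) (dH lam k) -
            PowerSeries.C (R := ℝ) (gbinom ((k : ℝ) - lam) k) * dlogNeg lam)) ∧
    PowerSeries.constantCoeff (R := ℝ) ((derivativeFun (R := ℝ))^[k] g) =
      k.factorial * dH lam k :=
  statement_13_general lam hlam g hg k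
end
end

section
/- Fix a nonzero real number λ. For all integers n ≥ 1 and k ≥ 1: C(k−λ, k) · H^{(k+1)}_{n,λ} = C(n+k, k) · (H_{n+k,λ} − H_{k,λ}), where C(k−λ,k) = (k−λ)(k−1−λ)···(1−λ)/k! and C(n+k,k) is the usual binomial coefficient. -/
open Finset

noncomputable section

/-- `T lam m = t_{m+1} = H_{m+1,λ} - H_{m,λ}` in product form. -/
def Tm (lam : ℝ) (m : ℕ) : ℝ := (∏ i ∈ Finset.range m, ((i : ℝ) + 1 - lam)) / (m + 1).factorial

lemma prod_neg_aux (f : ℕ → ℝ) (m : ℕ) :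
    ∏ i ∈ Finset.range m, (-(f i)) = (-1) ^ m * ∏ i ∈ Finset.range m, f i := by
  induction m with
  | zero => simp
  | succ m ih => rw [Finset.prod_range_succ, Finset.prod_range_succ, ih]; ring

lemma dH_zero (lam : ℝ) : dH lam 0 = 0 := by simp [dH]

lemma dH_succ_s15 (lam : ℝ) (hlam : lam ≠ 0) (m : ℕ) :
    dH lam (m + 1) = dH lam m + Tm lam m := by
  unfold dH
  rw [Finset.sum_Icc_succ_top (by omega : 1 ≤ m + 1)]
  congr 1
  have h1 : ∏ i ∈ Finset.range (m + 1), (lam - (i : ℝ)) =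
      (∏ i ∈ Finset.range m, (lam - ((i : ℝ) + 1))) * lam := by
    rw [Finset.prod_range_succ', Nat.cast_zero, sub_zero]
    exact congrArg (· * lam) (Finset.prod_congr rfl fun i _ => by push_cast; ring)
  have h2 : ∏ i ∈ Finset.range m, ((i : ℝ) + 1 - lam) =
      (-1) ^ m * ∏ i ∈ Finset.range m, (lam - ((i : ℝ) + 1)) := by
    calc ∏ i ∈ Finset.range m, ((i : ℝ) + 1 - lam)
        = ∏ i ∈ Finset.range m, (-(lam - ((i : ℝ) + 1))) := by
          apply Finset.prod_congr rfl; intros; ring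
      _ = (-1) ^ m * ∏ i ∈ Finset.range m, (lam - ((i : ℝ) + 1)) := prod_neg_aux _ m
  show (-1 : ℝ) ^ (m + 1 - 1) * (1 / lam) * gbinom lam (m + 1) = Tm lam m
  simp only [Nat.add_sub_cancel, gbinom, Tm, h1, h2]
  field_simp

lemma Tm_rec (lam : ℝ) (m : ℕ) :
    ((m : ℝ) + 2) * Tm lam (m + 1) = ((m : ℝ) + 1 - lam) * Tm lam m := by
  have hf : ((m + 1).factorial : ℝ) ≠ 0 := by positivity
  simp only [Tm, Finset.prod_range_succ, Nat.factorial_succ (m + 1)]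
  push_cast
  field_simp
  ring

lemma hL (lam : ℝ) (hlam : lam ≠ 0) (p : ℕ) : ∀ m, p ≤ m →
    lam * (dH lam m - dH lam p) = ((p : ℝ) + 1) * Tm lam p - ((m : ℝ) + 1) * Tm lam m := by
  intro m hm
  induction m, hm using Nat.le_induction with
  | base => simp
  | succ m hm ih =>
    rw [dH_succ_s15 lam hlam]
    push_cast
    linear_combination ih + Tm_rec lam m

lemma hG (lam : ℝ) (k : ℕ) :
    ((k : ℝ) + 1) * gbinom (((k : ℝ) + 1) - lam) (k + 1) =
      (((k : ℝ) + 1) - lam) * gbinom ((k : ℝ) - lam) k := by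
  have hf : (k.factorial : ℝ) ≠ 0 := by positivity
  have h1 : ∏ i ∈ Finset.range (k + 1), (((k : ℝ) + 1 - lam) - i) =
      (∏ i ∈ Finset.range k, ((k : ℝ) - lam - i)) * ((k : ℝ) + 1 - lam) := by
    rw [Finset.prod_range_succ']
    push_cast
    congr 1
    · apply Finset.prod_congr rfl; intros; ring
    · ring
  simp only [gbinom, h1, Nat.factorial_succ]
  push_cast
  field_simp

lemma main_lemma (lam : ℝ) (hlam : lam ≠ 0) : ∀ (k n : ℕ),
    gbinom ((k : ℝ) - lam) k * dHyper lam (k + 1) n =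
      ((n + k).choose k : ℝ) * (dH lam (n + k) - dH lam k) := by
  intro k
  induction k with
  | zero =>
    intro n
    simp [gbinom, dHyper, dH_zero]
  | succ k ihk =>
    intro n
    induction n with
    | zero => simp [dHyper]
    | succ n ihn =>
      have hrec : dHyper lam (k + 1 + 1) (n + 1) =
          dHyper lam (k + 1 + 1) n + dHyper lam (k + 1) (n + 1) := by
        show (∑ j ∈ Finset.Icc 1 (n + 1), dHyper lam (k + 1) j) = _
        rw [Finset.sum_Icc_succ_top (by omega : 1 ≤ n + 1)]
        rfl
      have h1 := ihn
      have h2 := ihk (n + 1)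
      have h4 := hL lam hlam k (n + k + 1) (by omega)
      have h5 : (((n + k + 2).choose (k + 1) : ℕ) : ℝ) =
          ((n + k + 1).choose (k + 1) : ℝ) + ((n + k + 1).choose k : ℝ) := by
        rw [show n + k + 2 = (n + k + 1) + 1 from rfl, Nat.choose_succ_succ]
        push_cast
        ring
      have h6 : ((k : ℝ) + 1) * ((n + k + 2).choose (k + 1) : ℝ) =
          ((n : ℝ) + k + 2) * ((n + k + 1).choose k : ℝ) := by
        have := Nat.add_one_mul_choose_eq (n + k + 1) k
        have h' : ((n + k + 2) * (n + k + 1).choose k : ℕ) = ((n + k + 2).choose (k + 1) * (k + 1) : ℕ) := this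
        have := congrArg (fun x : ℕ => (x : ℝ)) h'
        push_cast at this
        linarith
      -- normalize indices
      rw [show n + (k + 1) = n + k + 1 from by omega] at h1
      rw [show n + 1 + k = n + k + 1 from by omega] at h2
      rw [show n + 1 + (k + 1) = n + k + 2 from by omega]
      rw [hrec]
      rw [dH_succ_s15 lam hlam (n + k + 1), dH_succ_s15 lam hlam k] at *
      have hK : ((k : ℝ) + 1) ≠ 0 := by positivity
      have h3 := hG lam k
      push_cast at h1 h2 h3 h4 h5 h6 ⊢
      apply mul_left_cancel₀ hK
      linear_combination ((k : ℝ) + 1) * h1 + (dHyper lam (k + 1) (n + 1)) * h3 +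
        (((k : ℝ) + 1) - lam) * h2 - ((n + k + 1).choose k : ℝ) * h4 -
        (((k : ℝ) + 1) * (dH lam (n + k + 1) - dH lam k - Tm lam k)) * h5 -
        (Tm lam (n + k + 1)) * h6

/-- for `n ≥ 1` and `k ≥ 1`,
`C(k-λ,k) H^{(k+1)}_{n,λ} = C(n+k,k) (H_{n+k,λ} - H_{k,λ})`. -/
theorem statement_15 (lam : ℝ) (hlam : lam ≠ 0) (n k : ℕ) (hn : 1 ≤ n) (hk : 1 ≤ k) :
    gbinom ((k : ℝ) - lam) k * dHyper lam (k + 1) n =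
      ((n + k).choose k : ℝ) * (dH lam (n + k) - dH lam k) := by
  exact main_lemma lam hlam k n
end
end

section
/- Fix a nonzero real number λ and integers m ≥ 0, r ≥ 0. In ℝ[[x]], the following identity holds: Σ_{n=0}^{∞} H_{n,λ} (n+r)_{m,λ} x^n = Σ_{k=0}^{m} {m+r brace k+r}_{r,λ} · k! · x^k · (1−x)^{−(k+1)} · (H_{k,λ} − C(k−λ,k) · log_λ(1−x)), where C(k−λ,k) = (k−λ)(k−1−λ)···(1−λ)/k!. -/
open Finset PowerSeries

noncomputable section

/-!
Write `(1 - X) ^ a` (`oneSubPow a`) for the binomial series `∑ (-1)^n C(a,n) X^n`, `a` real.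
By Chu–Vandermonde these series multiply like powers, `log_λ(1 - x) = ((1 - x)^λ - 1) / λ`, and
telescoping Pascal's rule gives `H_{n,λ} = (1 - (-1)^n C(λ-1,n)) / λ`. Hence the `k`-th summand on
the right is `k!/λ · x^k ((1 - x)^{-(k+1)} - C(k-λ,k) (1 - x)^{λ-1-k})`, whose `n`-th coefficient is
`(n)_k H_{n,λ}` because `C(n,k) C(λ-1,n) = C(λ-1,k) C(λ-1-k,n-k)`. Expanding
`(n+r)_{m,λ} = ∑_k {m+r brace k+r}_{r,λ} (n)_k` finishes the proof.
-/

namespace PowerSeries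

variable {R : Type*} [CommRing R] [BinomialRing R]

def oneSubPow (a : R) : R⟦X⟧ := mk fun n => (-1) ^ n * Ring.choose a n

theorem coeff_oneSubPow (a : R) (n : ℕ) :
    coeff n (oneSubPow a) = (-1) ^ n * Ring.choose a n :=
  coeff_mk _ _

theorem oneSubPow_add (a b : R) : oneSubPow (a + b) = oneSubPow a * oneSubPow b := by
  ext n
  rw [coeff_mul, coeff_oneSubPow, Ring.add_choose_eq n (Commute.all a b), Finset.mul_sum]
  refine Finset.sum_congr rfl fun ij hij => ?_
  rw [coeff_oneSubPow, coeff_oneSubPow, ← Finset.HasAntidiagonal.mem_antidiagonal.mp hij, pow_add]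
  ring

theorem oneSubPow_zero : oneSubPow (0 : R) = 1 := by
  ext n
  cases n <;> simp [coeff_oneSubPow, coeff_one]

theorem oneSubPow_one : oneSubPow (1 : R) = 1 - X := by
  ext n
  rcases n with _ | _ | n <;> simp [coeff_oneSubPow, coeff_one, coeff_X]
  simpa [Nat.choose_eq_zero_of_lt] using Ring.choose_natCast (R := R) 1 (n + 2)

theorem oneSubPow_nsmul (n : ℕ) (a : R) : oneSubPow (n • a) = oneSubPow a ^ n := by
  induction n with
  | zero => rw [zero_smul, oneSubPow_zero, pow_zero]
  | succ n ih => rw [succ_nsmul, oneSubPow_add, ih, pow_succ]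

theorem oneSubPow_neg_one_mul_one_sub_X : oneSubPow (-1 : R) * (1 - X) = 1 := by
  rw [← oneSubPow_one, ← oneSubPow_add, neg_add_cancel, oneSubPow_zero]

theorem coeff_oneSubPow_neg_succ (k j : ℕ) :
    coeff j (oneSubPow (-(k + 1) : R)) = (j + k).choose k := by
  rw [coeff_oneSubPow, Ring.choose_neg, Units.smul_def, Int.coe_negOnePow_natCast, zsmul_eq_mul,
    show (k + 1 + j - 1 : R) = ((j + k : ℕ) : R) by push_cast; ring, Ring.choose_natCast,
    Nat.choose_symm_add]
  push_cast
  rw [← mul_assoc, ← mul_pow, neg_one_mul, neg_neg, one_pow, one_mul]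

end PowerSeries

theorem ff_eq_factorial_mul_choose (x : ℝ) (k : ℕ) : ff x k = k.factorial * Ring.choose x k := by
  rw [ff, ← descPochhammer_eval_eq_prod_range, ← descPochhammer_map (Int.castRingHom ℝ),
    Polynomial.eval_map, ← algebraMap_int_eq, ← Polynomial.aeval_def, Polynomial.aeval_eq_smeval,
    Ring.descPochhammer_eq_factorial_smul_choose, nsmul_eq_mul]

theorem gbinom_eq_choose (x : ℝ) (k : ℕ) : gbinom x k = Ring.choose x k := by
  rw [gbinom, ← ff, ff_eq_factorial_mul_choose, mul_div_cancel_left₀ _ (by positivity)]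

theorem gbinom_natCast_sub (lam : ℝ) (k : ℕ) :
    gbinom (k - lam) k = (-1) ^ k * Ring.choose (lam - 1) k := by
  rw [gbinom_eq_choose, show (k - lam : ℝ) = -(lam - k) by ring, Ring.choose_neg, Units.smul_def,
    Int.coe_negOnePow_natCast, zsmul_eq_mul, sub_add_cancel]
  push_cast
  rfl

theorem dH_eq_s16 (lam : ℝ) (n : ℕ) :
    dH lam n = lam⁻¹ * (1 - (-1) ^ n * Ring.choose (lam - 1) n) := by
  induction n with
  | zero => simp [dH]
  | succ n ih =>
    rw [dH, Finset.sum_Icc_succ_top (by omega), ← dH, ih, Nat.add_sub_cancel, gbinom_eq_choose,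
      show lam = lam - 1 + 1 by ring, Ring.choose_succ_succ]
    simp only [add_sub_cancel_right]
    ring

theorem dH_add_gbinom_natCast_sub_mul_inv (lam : ℝ) (k : ℕ) :
    dH lam k + gbinom (k - lam) k * lam⁻¹ = lam⁻¹ := by
  rw [dH_eq_s16, gbinom_natCast_sub]
  ring

theorem dlogNeg_eq (lam : ℝ) : dlogNeg lam = C lam⁻¹ * (oneSubPow lam - 1) := by
  ext n
  rw [dlogNeg, coeff_mk, coeff_C_mul, map_sub, coeff_oneSubPow, coeff_one, gbinom_eq_choose]
  rcases n with _ | n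
  · simp
  · simp only [Nat.add_one_ne_zero, if_false, sub_zero]
    ring

def harmonicTerm (lam : ℝ) (k : ℕ) : ℝ⟦X⟧ :=
  X ^ k * ((1 - X : ℝ⟦X⟧)⁻¹) ^ (k + 1) * (C (dH lam k) - C (gbinom (k - lam) k) * dlogNeg lam)

theorem harmonicTerm_eq (lam : ℝ) (k : ℕ) :
    harmonicTerm lam k = X ^ k * (C lam⁻¹ *
      (oneSubPow (-(k + 1) : ℝ) - C (gbinom (k - lam) k) * oneSubPow (lam - 1 - k))) := by
  have hinv : (1 - X : ℝ⟦X⟧)⁻¹ = oneSubPow (-1) :=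
    (inv_eq_iff_mul_eq_one (by simp)).mpr oneSubPow_neg_one_mul_one_sub_X
  have hpow : oneSubPow (-1 : ℝ) ^ (k + 1) = oneSubPow (-(k + 1) : ℝ) := by
    rw [← oneSubPow_nsmul, nsmul_eq_mul]
    congr 1
    push_cast
    ring
  have hprod : oneSubPow (-(k + 1) : ℝ) * oneSubPow lam = oneSubPow (lam - 1 - k) := by
    rw [← oneSubPow_add]
    congr 1
    ring
  have hcoeff : C (dH lam k) + C (gbinom (k - lam) k) * C lam⁻¹ = C lam⁻¹ := by
    rw [← map_mul, ← map_add, dH_add_gbinom_natCast_sub_mul_inv]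
  rw [harmonicTerm, hinv, hpow, dlogNeg_eq]
  linear_combination (X ^ k * oneSubPow (-(k + 1) : ℝ)) * hcoeff -
    (X ^ k * C (gbinom (k - lam) k) * C lam⁻¹) * hprod

theorem mk_ff_mul_dH (lam : ℝ) (k : ℕ) :
    (mk fun n => ff n k * dH lam n) = (k.factorial : ℝ) • harmonicTerm lam k := by
  ext n
  rw [coeff_mk, coeff_smul, harmonicTerm_eq, coeff_X_pow_mul', ff_eq_factorial_mul_choose,
    Ring.choose_natCast]
  split_ifs with hkn
  · obtain ⟨j, rfl⟩ := Nat.exists_eq_add_of_le hkn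
    have h := Ring.choose_smul_choose (lam - 1) hkn
    rw [Nat.add_sub_cancel_left, nsmul_eq_mul] at h
    rw [Nat.add_sub_cancel_left, coeff_C_mul, map_sub, coeff_C_mul, coeff_oneSubPow_neg_succ,
      coeff_oneSubPow, gbinom_natCast_sub, dH_eq_s16, add_comm j k]
    linear_combination (-((k.factorial : ℝ) * lam⁻¹ * (-1) ^ (k + j))) * h
  · rw [Nat.choose_eq_zero_of_lt (by omega)]
    simp

/-- `S n k` stands for `{n+r brace k+r}_{r,λ}`, pinned down by `hS`. -/
theorem statement_16_general (lam : ℝ) (m r : ℕ)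
    (S : ℕ → ℕ → ℝ)
    (hS : ∀ (n : ℕ) (x : ℝ), dff lam (x + r) n = ∑ k ∈ Finset.range (n + 1), S n k * ff x k) :
    (PowerSeries.mk fun n => dH lam n * dff lam ((n : ℝ) + r) m) =
      ∑ k ∈ Finset.range (m + 1), (S m k * k.factorial) •
        (PowerSeries.X ^ k * ((1 - PowerSeries.X : PowerSeries ℝ)⁻¹) ^ (k + 1) *
          (PowerSeries.C (R := ℝ) (dH lam k) -
            PowerSeries.C (R := ℝ) (gbinom ((k : ℝ) - lam) k) * dlogNeg lam)) := by
  have hexpand : (mk fun n => dH lam n * dff lam ((n : ℝ) + r) m) =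
      ∑ k ∈ range (m + 1), S m k • mk fun n => ff n k * dH lam n := by
    ext n
    simp only [coeff_mk, hS, map_sum, coeff_smul, smul_eq_mul, Finset.mul_sum]
    exact Finset.sum_congr rfl fun k _ => by ring
  rw [hexpand]
  refine Finset.sum_congr rfl fun k _ => ?_
  rw [mk_ff_mul_dH, smul_smul, harmonicTerm]

/-- in `ℝ[[x]]`,
`∑_{n=0}^∞ H_{n,λ} (n+r)_{m,λ} x^n
  = ∑_{k=0}^m {m+r brace k+r}_{r,λ} k! x^k (1-x)^{-(k+1)} (H_{k,λ} - C(k-λ,k) log_λ(1-x))`,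
where `S n k` denotes the degenerate `r`-Stirling number of the second kind
`{n+r brace k+r}_{r,λ}`, characterized by `(x+r)_{n,λ} = ∑_{k=0}^n S n k (x)_k`. -/
theorem statement_16 (lam : ℝ) (hlam : lam ≠ 0) (m r : ℕ)
    (S : ℕ → ℕ → ℝ)
    (hS : ∀ (n : ℕ) (x : ℝ), dff lam (x + r) n = ∑ k ∈ Finset.range (n + 1), S n k * ff x k) :
    (PowerSeries.mk fun n => dH lam n * dff lam ((n : ℝ) + r) m) =
      ∑ k ∈ Finset.range (m + 1), (S m k * k.factorial) •
        (PowerSeries.X ^ k * ((1 - PowerSeries.X : PowerSeries ℝ)⁻¹) ^ (k + 1) *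
          (PowerSeries.C (R := ℝ) (dH lam k) -
            PowerSeries.C (R := ℝ) (gbinom ((k : ℝ) - lam) k) * dlogNeg lam)) :=
  statement_16_general lam m r S hS
end
end
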